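/- Let Σ be a finite alphabet, let r ≥ 2, and let φ : Σ → Σ^r be a uniform morphism of rank r. Then for every ε ∈ (0,1) and every symbol σ ∈ Σ there exists m ∈ ℕ such that the string φ^m(σ), obtained by m iterated applications of φ starting from σ, is not an ε-synchronization string. In particular, φ does not generate an infinite ε-synchronization string for any ε ∈ (0,1). -/

import Mathlib

/-!
A suitable power `Φ = φ^q` acts idempotently on sets of letters (some power of any element of
a finite monoid is idempotent): the letters of `Φ(Φ(x))` are those of `Φ(x)`. If `c` is a letter
of `Φ(σ)` whose image has the fewest distinct letters, then every letter `x` of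
`S = letters(Φ(c))` has `letters(Φ(x)) = S`; in particular the images of any two letters of `S`
share a letter.

This forces `ED(Φ^T(x), Φ^T(y)) / R^T → 0` for `x, y ∈ S`, where `R = r^q`. Cut `Φ^(s+1)(x)` and
`Φ^(s+1)(y)` into `R^s` blocks of length `R`: in each pair of corresponding blocks a common
letter sits at some pair of offsets, and by pigeonhole one pair of offsets works for a `1/R²`
fraction of the blocks. Aligning the two words with that shift matches those letters, so at
every deeper level the normalized distance shrinks by a fixed factor, up to an error `2/R^s`.
Finally, two adjacent letters `a, b` of `Φ(c)` give adjacent factors `Φ^T(a) Φ^T(b)` of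
`φ^(q(T+2))(σ)` whose edit distance is at most `(1 - ε) · 2R^T`.
-/

/-- The length of a longest common subsequence of two strings (lists). -/
noncomputable def lcsLen {α : Type*} (S T : List α) : ℕ :=
  sSup {n | ∃ U : List α, U.length = n ∧ U.Sublist S ∧ U.Sublist T}

/-- The edit distance (insertions/deletions) between two strings, via
`ED(S,T) = |S| + |T| - 2·LCS(S,T)`. -/
noncomputable def editDistance {α : Type*} (S T : List α) : ℕ :=
  S.length + T.length - 2 * lcsLen S T

/-- `strSlice S a b` is the substring `S[a, b)` of `S` (1-indexed, `b` excluded). -/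
def strSlice {α : Type*} (S : List α) (a b : ℕ) : List α :=
  (S.drop (a - 1)).take (b - a)

/-- `islice f a b` is the substring `f[a, b)` of the infinite string `f`
(1-indexed, `b` excluded). -/
def islice {α : Type*} (f : ℕ → α) (a b : ℕ) : List α :=
  (List.range (b - a)).map fun t => f (a + t)

/-- `S` is an ε-synchronization string: for all `1 ≤ i < j < k ≤ |S| + 1`,
`ED(S[i,j), S[j,k)) > (1-ε)(k-i)`. -/
def IsSyncString {α : Type*} (ε : ℝ) (S : List α) : Prop :=
  ∀ i j k : ℕ, 1 ≤ i → i < j → j < k → k ≤ S.length + 1 →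
    (1 - ε) * ((k : ℝ) - (i : ℝ)) < (editDistance (strSlice S i j) (strSlice S j k) : ℝ)

/-- `S` is an ε-synchronization circle: every cyclic rotation of `S` is an
ε-synchronization string. -/
def IsSyncCircle {α : Type*} (ε : ℝ) (S : List α) : Prop :=
  ∀ i : ℕ, 1 ≤ i → i ≤ S.length → IsSyncString ε (S.rotate (i - 1))

/-- An infinite ε-synchronization string (1-indexed). -/
def IsInfSyncString {α : Type*} (ε : ℝ) (f : ℕ → α) : Prop :=
  ∀ i j k : ℕ, 1 ≤ i → i < j → j < k →
    (1 - ε) * ((k : ℝ) - (i : ℝ)) < (editDistance (islice f i j) (islice f j k) : ℝ)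

/-- `S` is a `c`-long-distance ε-synchronization string: for all
`1 ≤ i < j ≤ i' < j' ≤ |S| + 1` with `l = (j-i)+(j'-i')`, if the two intervals
are adjacent (`i' = j`) or `l > c · log |S|`, then
`ED(S[i,j), S[i',j')) > (1-ε)·l`. -/
noncomputable def IsLongDistSyncString {α : Type*} (c ε : ℝ) (S : List α) : Prop :=
  ∀ i j i' j' : ℕ, 1 ≤ i → i < j → j ≤ i' → i' < j' → j' ≤ S.length + 1 →
    (i' = j ∨ c * Real.log (S.length : ℝ) < ((j : ℝ) - i) + ((j' : ℝ) - i')) →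
    (1 - ε) * (((j : ℝ) - i) + ((j' : ℝ) - i')) <
      (editDistance (strSlice S i j) (strSlice S i' j') : ℝ)

/-- An infinite weak ε-synchronization string: for all `1 ≤ i < j < k`,
`ED(S[i,j), S[j,k)) ≥ ⌊(1-ε)(k-i)⌋`. -/
def IsInfWeakSyncString {α : Type*} (ε : ℝ) (f : ℕ → α) : Prop :=
  ∀ i j k : ℕ, 1 ≤ i → i < j → j < k →
    ((⌊(1 - ε) * ((k : ℝ) - (i : ℝ))⌋ : ℤ) : ℝ) ≤
      (editDistance (islice f i j) (islice f j k) : ℝ)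

open Finset

section EditDistance

variable {α : Type*}

lemma exists_sublist_length_eq_lcsLen (S T : List α) :
    ∃ U : List α, U.length = lcsLen S T ∧ U.Sublist S ∧ U.Sublist T :=
  Nat.sSup_mem (s := {n | ∃ U : List α, U.length = n ∧ U.Sublist S ∧ U.Sublist T})
    ⟨0, [], rfl, List.nil_sublist _, List.nil_sublist _⟩
    ⟨S.length, by rintro _ ⟨U, rfl, hS, -⟩; exact hS.length_le⟩

lemma length_le_lcsLen {S T U : List α} (hS : U.Sublist S) (hT : U.Sublist T) :
    U.length ≤ lcsLen S T :=
  le_csSup ⟨S.length, by rintro _ ⟨V, rfl, hS, -⟩; exact hS.length_le⟩ ⟨U, rfl, hS, hT⟩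

lemma lcsLen_le_length_left (S T : List α) : lcsLen S T ≤ S.length := by
  obtain ⟨U, hU, hS, -⟩ := exists_sublist_length_eq_lcsLen S T
  exact hU ▸ hS.length_le

lemma lcsLen_le_length_right (S T : List α) : lcsLen S T ≤ T.length := by
  obtain ⟨U, hU, -, hT⟩ := exists_sublist_length_eq_lcsLen S T
  exact hU ▸ hT.length_le

@[simp]
lemma editDistance_self (S : List α) : editDistance S S = 0 := by
  have := length_le_lcsLen (List.Sublist.refl S) (List.Sublist.refl S)
  unfold editDistance
  omega

lemma editDistance_le_length_add (S T : List α) : editDistance S T ≤ S.length + T.length :=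
  Nat.sub_le _ _

lemma editDistance_append_le (A₁ A₂ B₁ B₂ : List α) :
    editDistance (A₁ ++ A₂) (B₁ ++ B₂) ≤ editDistance A₁ B₁ + editDistance A₂ B₂ := by
  obtain ⟨U₁, hU₁, hA₁, hB₁⟩ := exists_sublist_length_eq_lcsLen A₁ B₁
  obtain ⟨U₂, hU₂, hA₂, hB₂⟩ := exists_sublist_length_eq_lcsLen A₂ B₂
  have hlcs := length_le_lcsLen (hA₁.append hA₂) (hB₁.append hB₂)
  have := lcsLen_le_length_left A₁ B₁
  have := lcsLen_le_length_right A₁ B₁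
  have := lcsLen_le_length_left A₂ B₂
  have := lcsLen_le_length_right A₂ B₂
  simp only [editDistance, List.length_append] at hlcs ⊢
  omega

lemma editDistance_flatMap_le_mul_card [DecidableEq α] {β : Type*} (g : α → List β) {b : ℝ} :
    ∀ {C C' : List α}, C.length = C'.length →
      (∀ x ∈ C, ∀ y ∈ C', (editDistance (g x) (g y) : ℝ) ≤ b) →
      (editDistance (C.flatMap g) (C'.flatMap g) : ℝ) ≤
        b * #{i ∈ range C.length | C[i]? ≠ C'[i]?}
  | [], [], _, _ => by simp
  | x :: C, y :: C', hlen, hb => by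
    have ih := editDistance_flatMap_le_mul_card g (C := C) (C' := C') (by simpa using hlen)
      fun x hx y hy => hb x (List.mem_cons_of_mem _ hx) y (List.mem_cons_of_mem _ hy)
    have hhead : (editDistance (g x) (g y) : ℝ) ≤ b * if x = y then 0 else 1 := by
      split_ifs with hxy
      · simp [hxy]
      · simpa using hb x (by simp) y (by simp)
    have hcard : (#{i ∈ range (x :: C).length | (x :: C)[i]? ≠ (y :: C')[i]?} : ℝ) =
        (if x = y then 0 else 1) + #{i ∈ range C.length | C[i]? ≠ C'[i]?} := by
      simp only [card_filter, List.length_cons, sum_range_succ', List.getElem?_cons_succ,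
        List.getElem?_cons_zero, ne_eq, Option.some.injEq]
      push_cast
      split_ifs <;> ring
    calc (editDistance ((x :: C).flatMap g) ((y :: C').flatMap g) : ℝ)
        ≤ editDistance (g x) (g y) + editDistance (C.flatMap g) (C'.flatMap g) := by
          exact_mod_cast editDistance_append_le _ _ _ _
      _ ≤ _ := by rw [hcard, mul_add]; exact add_le_add hhead ih

end EditDistance

section MorphismPow

variable {α : Type*}

def morphismPow (φ : α → List α) (m : ℕ) (a : α) : List α :=
  (fun l => l.flatMap φ)^[m] [a]

variable (φ : α → List α)

@[simp]
lemma morphismPow_zero (a : α) : morphismPow φ 0 a = [a] := rfl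

lemma iterate_flatMap (m : ℕ) (l : List α) :
    (fun l => l.flatMap φ)^[m] l = l.flatMap (morphismPow φ m) := by
  induction m generalizing l with
  | zero => exact (List.flatMap_singleton' l).symm
  | succ m ih =>
    have hsucc : morphismPow φ (m + 1) = fun a => (φ a).flatMap (morphismPow φ m) := by
      funext a
      rw [morphismPow, Function.iterate_succ_apply, ih, List.flatMap_singleton]
    rw [Function.iterate_succ_apply, ih, hsucc, List.flatMap_assoc]

lemma morphismPow_add (m n : ℕ) (a : α) :
    morphismPow φ (m + n) a = (morphismPow φ n a).flatMap (morphismPow φ m) := by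
  rw [morphismPow, Function.iterate_add_apply, iterate_flatMap]
  rfl

@[simp]
lemma morphismPow_one (a : α) : morphismPow φ 1 a = φ a := by
  simp [morphismPow]

lemma morphismPow_succ (m : ℕ) (a : α) :
    morphismPow φ (m + 1) a = (φ a).flatMap (morphismPow φ m) := by
  rw [morphismPow_add, morphismPow_one]

lemma morphismPow_succ' (m : ℕ) (a : α) :
    morphismPow φ (m + 1) a = (morphismPow φ m a).flatMap φ := by
  rw [Nat.add_comm, morphismPow_add]
  rw [show morphismPow φ 1 = φ from funext (morphismPow_one φ)]

lemma morphismPow_morphismPow (p t : ℕ) :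
    morphismPow (morphismPow φ p) t = morphismPow φ (p * t) := by
  induction t with
  | zero => rfl
  | succ t ih =>
    funext a
    rw [morphismPow_succ, ih, Nat.mul_succ, morphismPow_add]

lemma length_morphismPow {r : ℕ} (hφ : ∀ a, (φ a).length = r) (m : ℕ) (a : α) :
    (morphismPow φ m a).length = r ^ m := by
  induction m generalizing a with
  | zero => rfl
  | succ m ih => simp [morphismPow_succ, List.length_flatMap, ih, hφ, pow_succ, mul_comm]

lemma mem_of_mem_morphismPow {S : Set α} (hS : ∀ x ∈ S, ∀ y ∈ φ x, y ∈ S) {m : ℕ} {x y : α}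
    (hx : x ∈ S) (hy : y ∈ morphismPow φ m x) : y ∈ S := by
  induction m generalizing x with
  | zero => simp_all
  | succ m ih =>
    obtain ⟨z, hz, hyz⟩ := List.mem_flatMap.1 (morphismPow_succ φ m x ▸ hy)
    exact ih (hS x hx z hz) hyz

lemma infix_morphismPow_add_two {σ c a b : α} (hc : c ∈ φ σ) (hab : [a, b] <:+: φ c) (T : ℕ) :
    morphismPow φ T a ++ morphismPow φ T b <:+: morphismPow φ (T + 2) σ := by
  rw [morphismPow_add, morphismPow_succ', morphismPow_one]
  simpa using (hab.trans (List.infix_flatMap_of_mem hc φ)).flatMap (morphismPow φ T)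

end MorphismPow

section Blocks

variable {α β : Type*}

lemma length_flatMap_of_length_eq {g : α → List β} {B : ℕ} (hg : ∀ a, (g a).length = B)
    (l : List α) : (l.flatMap g).length = l.length * B := by
  simp [List.length_flatMap, hg, List.map_const']

lemma getElem?_flatMap_mul_add {f : α → List β} {B : ℕ} (hf : ∀ a, (f a).length = B)
    (u : List α) (q : ℕ) {j : ℕ} (hj : j < B) :
    (u.flatMap f)[q * B + j]? = u[q]?.bind fun a => (f a)[j]? := by
  induction u generalizing q with
  | nil => simp
  | cons a u ih =>
    cases q with
    | zero => simp [List.getElem?_append_left (show j < (f a).length by rw [hf]; exact hj)]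
    | succ q =>
      rw [List.flatMap_cons, List.getElem?_append_right (by rw [hf]; nlinarith), hf,
        show (q + 1) * B + j - B = q * B + j by rw [Nat.succ_mul]; omega, ih]
      simp

lemma editDistance_flatMap_le_add_drop_take {g : α → List β} {B : ℕ}
    (hg : ∀ a, (g a).length = B) {w w' : List α} {k k' L : ℕ} (hk : k + L ≤ w.length)
    (hk' : k' + L ≤ w'.length) :
    editDistance (w.flatMap g) (w'.flatMap g) ≤ (w.length + w'.length - 2 * L) * B +
      editDistance (((w.drop k).take L).flatMap g) (((w'.drop k').take L).flatMap g) := by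
  have hsplit (A M D A' M' D' : List α) :
      editDistance ((A ++ (M ++ D)).flatMap g) ((A' ++ (M' ++ D')).flatMap g) ≤
        (A.length + D.length + A'.length + D'.length) * B +
          editDistance (M.flatMap g) (M'.flatMap g) := by
    have hA := editDistance_le_length_add (A.flatMap g) (A'.flatMap g)
    have hD := editDistance_le_length_add (D.flatMap g) (D'.flatMap g)
    have h₁ := editDistance_append_le (A.flatMap g) ((M ++ D).flatMap g) (A'.flatMap g)
      ((M' ++ D').flatMap g)
    have h₂ := editDistance_append_le (M.flatMap g) (D.flatMap g) (M'.flatMap g) (D'.flatMap g)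
    simp only [List.flatMap_append, length_flatMap_of_length_eq hg] at hA hD h₁ ⊢
    linarith
  have h := hsplit (w.take k) ((w.drop k).take L) ((w.drop k).drop L)
    (w'.take k') ((w'.drop k').take L) ((w'.drop k').drop L)
  simp only [List.take_append_drop, List.length_take, List.length_drop] at h
  refine h.trans (Nat.add_le_add_right (Nat.mul_le_mul_right _ ?_) _)
  omega

lemma editDistance_flatMap_le_of_matches [DecidableEq α] {g : α → List β} {B : ℕ}
    (hg : ∀ a, (g a).length = B) {w w' : List α} {k k' L : ℕ} (hk : k + L ≤ w.length)
    (hk' : k' + L ≤ w'.length) {b : ℝ} (hb : ∀ x ∈ w, ∀ y ∈ w', (editDistance (g x) (g y) : ℝ) ≤ b)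
    (hb0 : 0 ≤ b) {I : Finset ℕ} (hI : ∀ i ∈ I, i < L ∧ w[k + i]? = w'[k' + i]?) :
    (editDistance (w.flatMap g) (w'.flatMap g) : ℝ) ≤
      ((w.length + w'.length - 2 * L : ℕ) : ℝ) * B + b * (L - #I) := by
  have halign := (Nat.cast_le (α := ℝ)).2 (editDistance_flatMap_le_add_drop_take hg hk hk')
  push_cast at halign
  set C := (w.drop k).take L
  set C' := (w'.drop k').take L
  have hC : C.length = L := by simp only [List.length_take, List.length_drop, C]; omega
  have hC' : C'.length = L := by simp only [List.length_take, List.length_drop, C']; omega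
  have hmism := editDistance_flatMap_le_mul_card g (hC.trans hC'.symm) (b := b)
    fun x hx y hy => hb x (List.mem_of_mem_drop (List.mem_of_mem_take hx))
      y (List.mem_of_mem_drop (List.mem_of_mem_take hy))
  have hcount : #{i ∈ range C.length | C[i]? ≠ C'[i]?} + #I ≤ L := by
    rw [← card_union_of_disjoint]
    · refine (card_le_card fun i hi => ?_).trans (card_range L).le
      simp only [mem_union, mem_filter, mem_range, hC] at hi ⊢
      exact hi.elim And.left fun hi => (hI i hi).1
    · refine disjoint_left.2 fun i hi hiI => (mem_filter.1 hi).2 ?_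
      simp [C, C', List.getElem?_drop, (hI i hiI).1, (hI i hiI).2]
  have hcount' : (#{i ∈ range C.length | C[i]? ≠ C'[i]?} : ℝ) ≤ L - #I := by
    have : ((#{i ∈ range C.length | C[i]? ≠ C'[i]?} + #I : ℕ) : ℝ) ≤ L := by exact_mod_cast hcount
    push_cast at this
    linarith
  linarith [mul_le_mul_of_nonneg_left hcount' hb0]

end Blocks

lemma sub_one_mul_sub_div_sq_le {R N : ℝ} (hR : 1 ≤ R) (hN : 1 ≤ N) :
    (N - 1) * R - (N - 1) / R ^ 2 ≤ (1 - 1 / (2 * R ^ 3)) * (N * R) := by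
  have hgap : 0 ≤ (2 * R ^ 3 + N - 2) / (2 * R ^ 2) := by
    have : 1 ≤ R ^ 3 := one_le_pow₀ hR
    exact div_nonneg (by linarith) (by positivity)
  have : (N - 1) * R - (N - 1) / R ^ 2 =
      (1 - 1 / (2 * R ^ 3)) * (N * R) - (2 * R ^ 3 + N - 2) / (2 * R ^ 2) := by
    field_simp
    ring
  linarith

section Contraction

variable {α : Type*} {Φ : α → List α} {R : ℕ} {S : Set α}

lemma exists_getElem?_morphismPow_succ_eq (hΦ : ∀ a, (Φ a).length = R)
    (hS : ∀ x ∈ S, ∀ y ∈ Φ x, y ∈ S) (hcommon : ∀ x ∈ S, ∀ y ∈ S, ∃ z, z ∈ Φ x ∧ z ∈ Φ y)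
    {s q : ℕ} (hq : q < R ^ s) {x y : α} (hx : x ∈ S) (hy : y ∈ S) :
    ∃ j₁ < R, ∃ j₂ < R,
      (morphismPow Φ (s + 1) x)[q * R + j₁]? = (morphismPow Φ (s + 1) y)[q * R + j₂]? := by
  have hu : q < (morphismPow Φ s x).length := by rwa [length_morphismPow Φ hΦ]
  have hv : q < (morphismPow Φ s y).length := by rwa [length_morphismPow Φ hΦ]
  obtain ⟨z, hzx, hzy⟩ := hcommon _ (mem_of_mem_morphismPow Φ hS hx (List.getElem_mem hu))
    _ (mem_of_mem_morphismPow Φ hS hy (List.getElem_mem hv))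
  obtain ⟨j₁, hj₁, hz₁⟩ := List.getElem_of_mem hzx
  obtain ⟨j₂, hj₂, hz₂⟩ := List.getElem_of_mem hzy
  have hj₁R : j₁ < R := hΦ _ ▸ hj₁
  have hj₂R : j₂ < R := hΦ _ ▸ hj₂
  refine ⟨j₁, hj₁R, j₂, hj₂R, ?_⟩
  rw [morphismPow_succ', morphismPow_succ', getElem?_flatMap_mul_add hΦ _ _ hj₁R,
    getElem?_flatMap_mul_add hΦ _ _ hj₂R, List.getElem?_eq_getElem hu,
    List.getElem?_eq_getElem hv, Option.bind_some, Option.bind_some,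
    List.getElem?_eq_getElem hj₁, List.getElem?_eq_getElem hj₂, hz₁, hz₂]

lemma exists_shift_matches (hΦ : ∀ a, (Φ a).length = R)
    (hS : ∀ x ∈ S, ∀ y ∈ Φ x, y ∈ S) (hcommon : ∀ x ∈ S, ∀ y ∈ S, ∃ z, z ∈ Φ x ∧ z ∈ Φ y)
    (hR : 0 < R) (s : ℕ) {x y : α} (hx : x ∈ S) (hy : y ∈ S) :
    ∃ k₁ < R, ∃ k₂ < R, ∃ I : Finset ℕ, ((R : ℝ) ^ s - 1) / R ^ 2 ≤ #I ∧ ∀ i ∈ I,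
      i < (R ^ s - 1) * R ∧
        (morphismPow Φ (s + 1) x)[k₁ + i]? = (morphismPow Φ (s + 1) y)[k₂ + i]? := by
  classical
  have hoff (q : ℕ) : ∃ jj ∈ range R ×ˢ range R, q < R ^ s →
      (morphismPow Φ (s + 1) x)[q * R + jj.1]? = (morphismPow Φ (s + 1) y)[q * R + jj.2]? := by
    by_cases hq : q < R ^ s
    · obtain ⟨j₁, hj₁, j₂, hj₂, h⟩ :=
        exists_getElem?_morphismPow_succ_eq hΦ hS hcommon hq hx hy
      exact ⟨(j₁, j₂), by simp [hj₁, hj₂], fun _ => h⟩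
    · exact ⟨(0, 0), by simp [hR], fun h => absurd h hq⟩
  choose off hoff_mem hoff using hoff
  have hN : 1 ≤ R ^ s := Nat.one_le_pow _ _ hR
  -- pigeonhole: one pair of offsets serves a `1 / R²` fraction of the blocks
  obtain ⟨k, hk, hQ⟩ := exists_le_card_fiber_of_nsmul_le_card_of_maps_to
    (s := range (R ^ s - 1)) (f := off) (fun q _ => hoff_mem q) ⟨(0, 0), by simp [hR]⟩
    (b := ((R : ℝ) ^ s - 1) / R ^ 2) (by
      rw [card_product, card_range, card_range, nsmul_eq_mul, Nat.cast_sub hN]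
      field_simp
      push_cast
      exact le_of_eq (by ring))
  obtain ⟨hk₁, hk₂⟩ : k.1 < R ∧ k.2 < R := by simpa using hk
  refine ⟨k.1, hk₁, k.2, hk₂, {q ∈ range (R ^ s - 1) | off q = k}.image (· * R), ?_,
    fun i hi => ?_⟩
  · rwa [card_image_of_injective _ (mul_left_injective₀ hR.ne')]
  obtain ⟨q, hq, rfl⟩ := mem_image.1 hi
  obtain ⟨hqN, hqk⟩ := mem_filter.1 hq
  rw [mem_range] at hqN
  refine ⟨Nat.mul_lt_mul_of_pos_right hqN hR, ?_⟩
  rw [Nat.add_comm k.1, Nat.add_comm k.2, ← hqk]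
  exact hoff q (by omega)

lemma editDistance_morphismPow_add_succ_le [DecidableEq α] (hΦ : ∀ a, (Φ a).length = R)
    (hS : ∀ x ∈ S, ∀ y ∈ Φ x, y ∈ S) (hcommon : ∀ x ∈ S, ∀ y ∈ S, ∃ z, z ∈ Φ x ∧ z ∈ Φ y)
    (hR : 0 < R) {t : ℕ} {b : ℝ}
    (hb : ∀ x ∈ S, ∀ y ∈ S,
      (editDistance (morphismPow Φ t x) (morphismPow Φ t y) : ℝ) ≤ b * R ^ t)
    (s : ℕ) {x y : α} (hx : x ∈ S) (hy : y ∈ S) :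
    (editDistance (morphismPow Φ (t + (s + 1)) x) (morphismPow Φ (t + (s + 1)) y) : ℝ) ≤
      (2 / R ^ s + (1 - 1 / (2 * R ^ 3)) * b) * R ^ (t + (s + 1)) := by
  obtain ⟨k₁, hk₁, k₂, hk₂, I, hI, hmatch⟩ := exists_shift_matches hΦ hS hcommon hR s hx hy
  have hb0 : 0 ≤ b := by
    have := hb x hx x hx
    rw [editDistance_self, Nat.cast_zero] at this
    exact nonneg_of_mul_nonneg_left this (by positivity)
  have hN : 1 ≤ R ^ s := Nat.one_le_pow _ _ hR
  have hlen (z : α) : (morphismPow Φ (s + 1) z).length = R ^ s * R := by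
    rw [length_morphismPow Φ hΦ, pow_succ]
  have hLR : (R ^ s - 1) * R + R = R ^ s * R := by
    rw [← Nat.succ_mul, Nat.succ_eq_add_one, Nat.sub_add_cancel hN]
  have halign := editDistance_flatMap_le_of_matches (length_morphismPow Φ hΦ t)
    (show k₁ + (R ^ s - 1) * R ≤ _ by rw [hlen]; omega)
    (show k₂ + (R ^ s - 1) * R ≤ _ by rw [hlen]; omega)
    (fun z hz z' hz' => hb z (mem_of_mem_morphismPow Φ hS hx hz)
      z' (mem_of_mem_morphismPow Φ hS hy hz')) (by positivity) hmatch
  rw [hlen, hlen, show R ^ s * R + R ^ s * R - 2 * ((R ^ s - 1) * R) = 2 * R by omega,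
    ← morphismPow_add, ← morphismPow_add] at halign
  have hR1 : (1 : ℝ) ≤ R := by exact_mod_cast hR
  calc _ ≤ 2 * R * R ^ t + b * R ^ t * ((R ^ s - 1) * R - (R ^ s - 1) / R ^ 2) := by
        push_cast [Nat.cast_sub hN] at halign
        nlinarith [mul_nonneg hb0 (pow_nonneg (zero_le_one.trans hR1) t)]
    _ ≤ 2 * R * R ^ t + b * R ^ t * ((1 - 1 / (2 * R ^ 3)) * (R ^ s * R)) := by
        gcongr
        exact sub_one_mul_sub_div_sq_le hR1 (one_le_pow₀ hR1)
    _ = (2 / R ^ s + (1 - 1 / (2 * R ^ 3)) * b) * R ^ (t + (s + 1)) := by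
        field_simp
        ring

lemma editDistance_morphismPow_mul_le [DecidableEq α] (hΦ : ∀ a, (Φ a).length = R)
    (hS : ∀ x ∈ S, ∀ y ∈ Φ x, y ∈ S) (hcommon : ∀ x ∈ S, ∀ y ∈ S, ∃ z, z ∈ Φ x ∧ z ∈ Φ y)
    (hR : 0 < R) (s k : ℕ) {x y : α} (hx : x ∈ S) (hy : y ∈ S) :
    (editDistance (morphismPow Φ ((s + 1) * k) x) (morphismPow Φ ((s + 1) * k) y) : ℝ) ≤
      (4 * R ^ 3 / R ^ s + 2 * (1 - 1 / (2 * R ^ 3)) ^ k) * R ^ ((s + 1) * k) := by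
  induction k generalizing x y with
  | zero =>
    have : (editDistance [x] [y] : ℝ) ≤ 2 := by exact_mod_cast editDistance_le_length_add [x] [y]
    simp only [Nat.mul_zero, morphismPow_zero, pow_zero, mul_one]
    linarith [show 0 ≤ 4 * (R : ℝ) ^ 3 / R ^ s by positivity]
  | succ k ih =>
    rw [Nat.mul_succ]
    refine (editDistance_morphismPow_add_succ_le hΦ hS hcommon hR
      (fun x hx y hy => ih hx hy) s hx hy).trans (le_of_eq ?_)
    have key : 2 / (R : ℝ) ^ s + (1 - 1 / (2 * R ^ 3)) * (4 * R ^ 3 / R ^ s) =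
        4 * R ^ 3 / R ^ s := by
      have : (R : ℝ) ≠ 0 := by positivity
      field_simp
      ring
    linear_combination (R : ℝ) ^ ((s + 1) * k + (s + 1)) * key

theorem exists_editDistance_morphismPow_le (hΦ : ∀ a, (Φ a).length = R)
    (hS : ∀ x ∈ S, ∀ y ∈ Φ x, y ∈ S) (hcommon : ∀ x ∈ S, ∀ y ∈ S, ∃ z, z ∈ Φ x ∧ z ∈ Φ y)
    (hR : 2 ≤ R) {η : ℝ} (hη : 0 < η) :
    ∃ T, ∀ x ∈ S, ∀ y ∈ S,
      (editDistance (morphismPow Φ T x) (morphismPow Φ T y) : ℝ) ≤ η * R ^ T := by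
  classical
  have hR1 : (1 : ℝ) < R := by exact_mod_cast hR
  obtain ⟨s, hs⟩ := pow_unbounded_of_one_lt (8 * R ^ 3 / η) hR1
  obtain ⟨k, hk⟩ := exists_pow_lt_of_lt_one (show 0 < η / 4 by positivity)
    (show 1 - 1 / (2 * (R : ℝ) ^ 3) < 1 by simp only [sub_lt_self_iff]; positivity)
  refine ⟨(s + 1) * k, fun x hx y hy =>
    (editDistance_morphismPow_mul_le hΦ hS hcommon (by omega) s k hx hy).trans ?_⟩
  gcongr
  have : 4 * (R : ℝ) ^ 3 / R ^ s < η / 2 := by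
    rw [div_lt_iff₀ (by positivity)]
    rw [div_lt_iff₀ hη] at hs
    linarith
  linarith

end Contraction

lemma exists_isIdempotentElem_pow {M : Type*} [Monoid M] [Finite M] (a : M) :
    ∃ n, 0 < n ∧ IsIdempotentElem (a ^ n) := by
  obtain ⟨i, j, hij, h⟩ := Finite.exists_ne_map_eq_of_infinite (a ^ · : ℕ → M)
  wlog hlt : i < j generalizing i j
  · exact this j i hij.symm h.symm (by omega)
  have hper (k : ℕ) : a ^ (i + k * (j - i)) = a ^ i := by
    induction k with
    | zero => simp
    | succ k ih =>
      rw [Nat.succ_mul, ← Nat.add_assoc, pow_add, ih, ← pow_add, Nat.add_sub_cancel' hlt.le]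
      exact h.symm
  have hpos : 0 < j - i := Nat.sub_pos_of_lt hlt
  refine ⟨(i + 1) * (j - i), Nat.mul_pos i.succ_pos hpos, ?_⟩
  have hi : i ≤ (i + 1) * (j - i) := (Nat.le_mul_of_pos_right _ hpos).trans' (by omega)
  calc a ^ ((i + 1) * (j - i)) * a ^ ((i + 1) * (j - i))
      = a ^ ((i + 1) * (j - i) - i) * a ^ (i + (i + 1) * (j - i)) := by
        rw [← pow_add, ← pow_add]
        congr 1
        omega
    _ = a ^ ((i + 1) * (j - i)) := by
        rw [hper, ← pow_add, Nat.sub_add_cancel hi]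

section Letters

variable {α : Type*}

def letterStep (φ : α → List α) : Function.End (Set α) := fun A => {b | ∃ a ∈ A, b ∈ φ a}

lemma letterStep_morphismPow (φ : α → List α) (m : ℕ) :
    letterStep (morphismPow φ m) = letterStep φ ^ m := by
  induction m with
  | zero =>
    funext A
    change {b | ∃ a ∈ A, b ∈ [a]} = A
    ext
    simp
  | succ m ih =>
    funext A
    ext c
    rw [pow_succ', ← ih]
    change _ ↔ c ∈ letterStep φ (letterStep (morphismPow φ m) A)
    simp only [letterStep, morphismPow_succ', List.mem_flatMap, Set.mem_ofPred_eq]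
    exact ⟨fun ⟨a, ha, b, hb, hc⟩ => ⟨b, ⟨a, ha, hb⟩, hc⟩,
      fun ⟨b, ⟨a, ha, hb⟩, hc⟩ => ⟨a, ha, b, hb, hc⟩⟩

lemma exists_mem_forall_mem_iff_of_isIdempotentElem [DecidableEq α] {Φ : α → List α}
    (hΦ : IsIdempotentElem (letterStep Φ)) {x₀ : α} (hx₀ : Φ x₀ ≠ []) :
    ∃ c ∈ Φ x₀, ∀ x ∈ Φ c, ∀ z, z ∈ Φ x ↔ z ∈ Φ c := by
  have hidem (x z : α) : z ∈ Φ x ↔ ∃ y ∈ Φ x, z ∈ Φ y := by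
    have := Set.ext_iff.1 (congrFun hΦ {x}) z
    change z ∈ letterStep Φ (letterStep Φ {x}) ↔ _ at this
    simpa [letterStep] using this.symm
  obtain ⟨c, hc, hmin⟩ := (Φ x₀).toFinset.exists_min_image (fun c => (Φ c).toFinset.card)
    (List.toFinset_nonempty_iff _ |>.2 hx₀)
  rw [List.mem_toFinset] at hc
  refine ⟨c, hc, fun x hx => ?_⟩
  have hsub : (Φ x).toFinset ⊆ (Φ c).toFinset := fun z hz =>
    List.mem_toFinset.2 ((hidem c z).2 ⟨x, hx, List.mem_toFinset.1 hz⟩)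
  have heq := Finset.eq_of_subset_of_card_le hsub
    (hmin x (List.mem_toFinset.2 ((hidem x₀ x).2 ⟨c, hc, hx⟩)))
  intro z
  rw [← List.mem_toFinset, heq, List.mem_toFinset]

end Letters

lemma not_isSyncString_of_infix {α : Type*} {ε : ℝ} {A B W : List α} (hW : A ++ B <:+: W)
    (hA : A ≠ []) (hB : B ≠ [])
    (hAB : (editDistance A B : ℝ) ≤ (1 - ε) * (A.length + B.length)) :
    ¬ IsSyncString ε W := by
  obtain ⟨X, Y, rfl⟩ := hW
  have hA' := List.length_pos_of_ne_nil hA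
  have hB' := List.length_pos_of_ne_nil hB
  intro hsync
  have := hsync (X.length + 1) (X.length + 1 + A.length) (X.length + 1 + A.length + B.length)
    (by omega) (by omega) (by omega) (by simp only [List.append_assoc, List.length_append]; omega)
  simp only [Nat.cast_add, Nat.cast_one, strSlice, add_tsub_cancel_left, add_tsub_cancel_right,
    List.append_assoc, List.drop_left', List.take_left', Nat.succ_add_sub_one,
    List.drop_length_add_append] at this
  linarith

theorem morphism_not_sync_general {α : Type*} [Fintype α] (r : ℕ) (hr : 2 ≤ r)
    (φ : α → List α) (hφ : ∀ σ : α, (φ σ).length = r)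
    (ε : ℝ) (hε1 : ε < 1) (σ : α) :
    ∃ m : ℕ, ¬ IsSyncString ε ((fun l : List α => (l.map φ).flatten)^[m] [σ]) := by
  classical
  have : Finite (Function.End (Set α)) := inferInstanceAs (Finite (Set α → Set α))
  obtain ⟨q, hq, hidem⟩ := exists_isIdempotentElem_pow (letterStep φ)
  rw [← letterStep_morphismPow] at hidem
  set Φ := morphismPow φ q
  have hΦ : ∀ a, (Φ a).length = r ^ q := length_morphismPow φ hφ q
  have hR : 2 ≤ r ^ q := hr.trans (Nat.le_self_pow hq.ne' r)
  obtain ⟨c, hcσ, hc⟩ := exists_mem_forall_mem_iff_of_isIdempotentElem hidem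
    (List.ne_nil_of_length_pos (by rw [hΦ]; omega) : Φ σ ≠ [])
  obtain ⟨T, hT⟩ := exists_editDistance_morphismPow_le hΦ (S := {x | x ∈ Φ c})
    (fun x hx y hy => (hc x hx y).1 hy) (fun x hx y hy => ⟨x, (hc x hx x).2 hx, (hc y hy x).2 hx⟩)
    hR (η := 2 * (1 - ε)) (by linarith)
  obtain ⟨a, b, hab⟩ : ∃ a b, [a, b] <:+: Φ c := by
    match Φ c, hΦ c with
    | a :: b :: l, _ => exact ⟨a, b, (List.prefix_append [a, b] l).isInfix⟩
    | [], h | [_], h => simp only [List.length_cons, List.length_nil] at h; omega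
  have hlen (x : α) : (morphismPow Φ T x).length = (r ^ q) ^ T := length_morphismPow Φ hΦ T x
  refine ⟨q * (T + 2), ?_⟩
  change ¬ IsSyncString ε (morphismPow φ (q * (T + 2)) σ)
  rw [← morphismPow_morphismPow]
  refine not_isSyncString_of_infix (infix_morphismPow_add_two Φ hcσ hab T)
    (List.ne_nil_of_length_pos (by rw [hlen]; positivity))
    (List.ne_nil_of_length_pos (by rw [hlen]; positivity)) ?_
  have := hT a (hab.subset (by simp)) b (hab.subset (by simp))
  rw [hlen, hlen]
  push_cast at this ⊢
  linarith

/-- No uniform morphism of rank `r ≥ 2` over a finite alphabet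
generates an infinite ε-synchronization string for any `ε ∈ (0,1)`: for every
symbol `σ` there is an `m` such that `φ^m(σ)` is not an ε-synchronization
string. -/
theorem morphism_not_sync {α : Type*} [Fintype α] (r : ℕ) (hr : 2 ≤ r)
    (φ : α → List α) (hφ : ∀ σ : α, (φ σ).length = r)
    (ε : ℝ) (hε : 0 < ε) (hε1 : ε < 1) (σ : α) :
    ∃ m : ℕ, ¬ IsSyncString ε ((fun l : List α => (l.map φ).flatten)^[m] [σ]) :=
  morphism_not_sync_general r hr φ hφ ε hε1 σ
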